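/- Let m ≥ 1 and let u(z) = e^{iπ/m} z + z^{2m+1} ∈ ℂ[[z]]. If g ∈ ℂ[[z]] has zero constant coefficient and satisfies g(g(z)) = u(z), then, writing c₁ = coeff₁(g) and c_{2m+1} = coeff_{2m+1}(g), the coefficient of z^{2m+1} in g(g(z)) yields the equation c_{2m+1} · c₁ · (c₁^{2m} + 1) = 1. -/

import Mathlib

set_option linter.unnecessarySeqFocus false


/-- Substitution (composition) of formal power series: `substComp g f = f(g(z))`.
For `g` with zero constant coefficient this agrees with Mathlib's `PowerSeries.subst g f`. -/
noncomputable def PowerSeries.substComp {R : Type*} [CommRing R] (g f : PowerSeries R) :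
    PowerSeries R :=
  PowerSeries.mk fun n => PowerSeries.coeff n (Polynomial.aeval g (PowerSeries.trunc (n + 1) f))

lemma coeff_substComp_eq {g f : PowerSeries ℂ} (n : ℕ) :
    PowerSeries.coeff n (PowerSeries.substComp g f)
      = ∑ j ∈ Finset.range (n + 1), PowerSeries.coeff j f * PowerSeries.coeff n (g ^ j) := by
  rw [PowerSeries.substComp, PowerSeries.coeff_mk,
    Polynomial.aeval_eq_sum_range' (PowerSeries.natDegree_trunc_lt f n) g, map_sum]
  refine Finset.sum_congr rfl fun j hj => ?_
  rw [map_smul, PowerSeries.coeff_trunc, if_pos (Finset.mem_range.mp hj), smul_eq_mul]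

lemma coeff_pow_eq_zero_of_lt {g : PowerSeries ℂ} (hg0 : PowerSeries.constantCoeff g = 0)
    {n j : ℕ} (h : n < j) : PowerSeries.coeff n (g ^ j) = 0 := by
  have hdvd : (PowerSeries.X : PowerSeries ℂ) ^ j ∣ g ^ j :=
    pow_dvd_pow_of_dvd (PowerSeries.X_dvd_iff.mpr hg0) j
  exact PowerSeries.X_pow_dvd_iff.mp hdvd n h

lemma coeff_pow_self {g : PowerSeries ℂ} (hg0 : PowerSeries.constantCoeff g = 0) (n : ℕ) :
    PowerSeries.coeff n (g ^ n) = (PowerSeries.coeff 1 g) ^ n := by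
  obtain ⟨h, rfl⟩ := PowerSeries.X_dvd_iff.mpr hg0
  have h1 : PowerSeries.coeff 1 (PowerSeries.X * h) = PowerSeries.constantCoeff h := by
    rw [show (PowerSeries.X : PowerSeries ℂ) * h = PowerSeries.X ^ 1 * h by ring,
      PowerSeries.coeff_X_pow_mul']
    simp
  rw [h1, mul_pow, PowerSeries.coeff_X_pow_mul']
  simp

lemma coeff_substComp_self {g : PowerSeries ℂ} (hg0 : PowerSeries.constantCoeff g = 0)
    {n : ℕ} (hn : 2 ≤ n) (hmid : ∀ j, 2 ≤ j → j < n → PowerSeries.coeff j g = 0) :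
    PowerSeries.coeff n (PowerSeries.substComp g g)
      = PowerSeries.coeff n g * (PowerSeries.coeff 1 g + (PowerSeries.coeff 1 g) ^ n) := by
  rw [coeff_substComp_eq]
  have hsub : ({1, n} : Finset ℕ) ⊆ Finset.range (n + 1) := by
    intro x hx
    simp only [Finset.mem_insert, Finset.mem_singleton] at hx
    rcases hx with rfl | rfl <;> simp [Finset.mem_range] <;> omega
  rw [← Finset.sum_subset hsub]
  · rw [Finset.sum_pair (by omega : (1 : ℕ) ≠ n), coeff_pow_self hg0, pow_one]
    ring
  · intro j hj hj'
    simp only [Finset.mem_insert, Finset.mem_singleton, not_or] at hj'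
    rcases Nat.lt_or_ge j 2 with h2 | h2
    · interval_cases j
      · simp [hg0]
      · exact absurd rfl hj'.1
    · rcases Nat.lt_or_ge j n with h3 | h3
      · rw [hmid j h2 h3, zero_mul]
      · have : n < j := lt_of_le_of_ne h3 (Ne.symm hj'.2)
        rw [coeff_pow_eq_zero_of_lt hg0 this, mul_zero]

/-- If `g(g(z)) = e^{iπ/m} z + z^{2m+1}` with `g(0) = 0`, then comparing the coefficients of
`z^{2m+1}` yields `c_{2m+1} · c₁ · (c₁^{2m} + 1) = 1`. -/
theorem stmt3 (m : ℕ) (hm : 1 ≤ m) (u : PowerSeries ℂ)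
    (hu : u = PowerSeries.C (Complex.exp (Complex.I * Real.pi / m)) * PowerSeries.X
        + PowerSeries.X ^ (2 * m + 1))
    (g : PowerSeries ℂ) (hg0 : PowerSeries.constantCoeff g = 0)
    (hgg : PowerSeries.substComp g g = u) :
    PowerSeries.coeff (2 * m + 1) g * PowerSeries.coeff 1 g *
      ((PowerSeries.coeff 1 g) ^ (2 * m) + 1) = 1 := by
  set c1 := PowerSeries.coeff 1 g with hc1
  -- coefficient 1 equation: c1 ^ 2 = exp (I π / m)
  have hcoeff1 : c1 ^ 2 = Complex.exp (Complex.I * Real.pi / m) := by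
    have := congrArg (PowerSeries.coeff 1) hgg
    rw [coeff_substComp_eq] at this
    rw [hu] at this
    simp only [Finset.sum_range_succ, Finset.sum_range_zero, zero_add, pow_zero, pow_one,
      map_add, map_mul, PowerSeries.coeff_one, PowerSeries.coeff_C_mul, PowerSeries.coeff_X,
      PowerSeries.coeff_X_pow] at this
    rw [PowerSeries.coeff_zero_eq_constantCoeff, hg0] at this
    have h1 : ¬ (1 = 2 * m + 1) := by omega
    rw [if_neg h1] at this
    simpa [pow_two] using this
  have hexp_ne : Complex.exp (Complex.I * Real.pi / m) ≠ 0 := Complex.exp_ne_zero _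
  have hc1_ne : c1 ≠ 0 := by
    intro h
    rw [h] at hcoeff1
    simp at hcoeff1
    exact hexp_ne hcoeff1.symm
  have hmne : (m : ℂ) ≠ 0 := Nat.cast_ne_zero.mpr (by omega)
  -- c1 ^ (n - 1) ≠ -1 for 2 ≤ n ≤ 2m
  have hpow_ne : ∀ n : ℕ, 2 ≤ n → n ≤ 2 * m → c1 + c1 ^ n ≠ 0 := by
    intro n hn2 hn2m habs
    have hfac : c1 * (1 + c1 ^ (n - 1)) = 0 := by
      have : c1 ^ n = c1 * c1 ^ (n - 1) := by
        rw [← pow_succ']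
        congr 1
        omega
      rw [mul_add, mul_one, ← this]
      exact habs
    have h2 : (1 : ℂ) + c1 ^ (n - 1) = 0 := by
      rcases mul_eq_zero.mp hfac with h | h
      · exact absurd h hc1_ne
      · exact h
    have h3 : c1 ^ (n - 1) = -1 := by linear_combination h2
    have h4 : (c1 ^ 2) ^ (n - 1) = 1 := by
      rw [← pow_mul, mul_comm, pow_mul, h3, neg_one_sq]
    rw [hcoeff1, ← Complex.exp_nat_mul] at h4
    obtain ⟨k, hk⟩ := Complex.exp_eq_one_iff.mp h4
    -- (n-1) * (I * π / m) = k * (2 π I)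
    have hpi : (Real.pi : ℂ) ≠ 0 := by
      exact_mod_cast Real.pi_ne_zero
    have hI : Complex.I ≠ 0 := Complex.I_ne_zero
    have hcast : ((n - 1 : ℕ) : ℂ) = (n : ℂ) - 1 := by
      have : 1 ≤ n := by omega
      push_cast [this]
      ring
    rw [hcast] at hk
    have hn1 : ((n : ℂ) - 1) = 2 * k * m := by
      field_simp at hk
      have h5 : ((n : ℂ) - 1) * (Complex.I * Real.pi) = (2 * k * m) * (Complex.I * Real.pi) := by
        linear_combination (Complex.I * Real.pi) * hk
      exact mul_right_cancel₀ (mul_ne_zero hI hpi) h5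
    have hint : ((n : ℤ) - 1) = 2 * k * m := by exact_mod_cast hn1
    have hnZ : (2 : ℤ) ≤ (n : ℤ) := by exact_mod_cast hn2
    have hn2mZ : ((n : ℤ)) ≤ 2 * m := by exact_mod_cast hn2m
    have hmZ : (1 : ℤ) ≤ (m : ℤ) := by exact_mod_cast hm
    rcases le_or_gt k 0 with hk0 | hk0
    · nlinarith
    · have : (1 : ℤ) ≤ k := hk0
      nlinarith
  -- middle coefficients vanish
  have hzero : ∀ n, 2 ≤ n → n ≤ 2 * m → PowerSeries.coeff n g = 0 := by
    intro n
    induction n using Nat.strong_induction_on with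
    | _ n ih =>
      intro hn2 hn2m
      have hmid : ∀ j, 2 ≤ j → j < n → PowerSeries.coeff j g = 0 :=
        fun j hj2 hjn => ih j hjn hj2 (by omega)
      have heq := congrArg (PowerSeries.coeff n) hgg
      rw [coeff_substComp_self hg0 hn2 hmid, hu] at heq
      have hun : PowerSeries.coeff n
          (PowerSeries.C (Complex.exp (Complex.I * Real.pi / m)) * PowerSeries.X
            + PowerSeries.X ^ (2 * m + 1)) = 0 := by
        simp only [map_add, PowerSeries.coeff_C_mul, PowerSeries.coeff_X,
          PowerSeries.coeff_X_pow]
        rw [if_neg (by omega : ¬ n = 1), if_neg (by omega : ¬ n = 2 * m + 1)]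
        ring
      rw [hun] at heq
      rcases mul_eq_zero.mp heq with h | h
      · exact h
      · exact absurd h (hpow_ne n hn2 hn2m)
  -- the coefficient 2m+1 equation
  have hmid : ∀ j, 2 ≤ j → j < 2 * m + 1 → PowerSeries.coeff j g = 0 :=
    fun j hj2 hjn => hzero j hj2 (by omega)
  have heq := congrArg (PowerSeries.coeff (2 * m + 1)) hgg
  rw [coeff_substComp_self hg0 (by omega) hmid, hu] at heq
  have hun : PowerSeries.coeff (2 * m + 1)
      (PowerSeries.C (Complex.exp (Complex.I * Real.pi / m)) * PowerSeries.X
        + PowerSeries.X ^ (2 * m + 1)) = 1 := by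
    rw [map_add, PowerSeries.coeff_C_mul, PowerSeries.coeff_X, PowerSeries.coeff_X_pow,
      if_neg (by omega : ¬ 2 * m + 1 = 1), if_pos rfl]
    ring
  rw [hun] at heq
  calc PowerSeries.coeff (2 * m + 1) g * c1 * (c1 ^ (2 * m) + 1)
      = PowerSeries.coeff (2 * m + 1) g * (c1 + c1 ^ (2 * m + 1)) := by ring
    _ = 1 := heq
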